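/- Let F be a finite field, let f ∈ F[X] be a polynomial with f(0) ≠ 0, and let R := { β ∈ F⟦X⟧ : ∃ m ∈ ℕ, ∃ p ∈ F[X], f^m · β = p in F⟦X⟧ }. Let G := { AffMap(α, β) : β ∈ R, α ∈ R a unit of the ring R }. Then G is a subgroup of Aut(T_F) which is self-similar, coarsely diagonal, and finite-state. -/

import Mathlib

/-!
The state at a vertex `u` of length `k` of the affine map `w ↦ α w + β` is again affine with the
same linear part: it is `w ↦ α w + β_u`, where `β_u` is `α u + β` with its first `k`
coefficients dropped. Dropping coefficients preserves the subring `R`, so the group is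
self-similar, and `g_u⁻¹ g` is a translation, whose order is the characteristic of `F`.
If `f^m α` and `f^m β` are polynomials, then so is `f^m β_u`, of degree bounded independently
of `u`; as `f^m` is cancellable and `F` is finite, `g` has finitely many states.
-/

namespace RoverNekrashevych

/-- The state (section) of `f` at the word `u`. -/
def state {X : Type*} (f : List X → List X) (u : List X) : List X → List X :=
  fun w => (f (u ++ w)).drop u.length

/-- A function on words is finite-state if it has only finitely many states. -/
def FiniteStateFun {X : Type*} (f : List X → List X) : Prop :=
  Set.Finite {g : List X → List X | ∃ u : List X, g = state f u}

/-- The truncated power series `Σ_{i < length w} w_i X^i` determined by a word. -/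
noncomputable def wordToSeries {F : Type*} [CommSemiring F] (w : List F) : PowerSeries F :=
  PowerSeries.mk fun i => w.getD i 0

/-- The affine map `AffMap (α, β)` on words: it sends `(c_0, …, c_{e-1})` to the word of
the first `e` coefficients of `α · (Σ_{i<e} c_i X^i) + β`. -/
noncomputable def affWord {F : Type*} [CommSemiring F] (α β : PowerSeries F) (w : List F) :
    List F :=
  List.ofFn fun i : Fin w.length => PowerSeries.coeff i (α * wordToSeries w + β)

/-- `f` is an automorphism of the infinite rooted tree with vertex set `List X`. -/
def IsTreeAut {X : Type*} (f : Equiv.Perm (List X)) : Prop :=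
  f [] = [] ∧ ∀ (u : List X) (x : X), ∃ y : X, f (u ++ [x]) = f u ++ [y]

/-- `G` consists of tree automorphisms. -/
def IsTreeAutGroup {X : Type*} (G : Subgroup (Equiv.Perm (List X))) : Prop :=
  ∀ f ∈ G, IsTreeAut f

/-- `G` is self-similar: all states of elements of `G` are realized by elements of `G`. -/
def SelfSimilar {X : Type*} (G : Subgroup (Equiv.Perm (List X))) : Prop :=
  ∀ f ∈ G, ∀ u : List X, ∃ g ∈ G, ⇑g = state (⇑f) u

/-- `G` is finite-state if all its elements are. -/
def FiniteStateGroup {X : Type*} (G : Subgroup (Equiv.Perm (List X))) : Prop :=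
  ∀ f ∈ G, FiniteStateFun ⇑f

/-- `G` is coarsely diagonal: for `g ∈ G`, each state `g_u` is realized by some `g' ∈ G`,
and `g'⁻¹ * g` has finite order. -/
def CoarselyDiagonal {X : Type*} (G : Subgroup (Equiv.Perm (List X))) : Prop :=
  ∀ g ∈ G, ∀ u : List X, ∃ g' ∈ G, ⇑g' = state (⇑g) u ∧ IsOfFinOrder (g'⁻¹ * g)

/-- The image of the localization `F[X][1/f]` inside `F⟦X⟧`: the ring of `S`-integers for
`S` the places dividing `f` together with the place at infinity. -/
def Rset {F : Type*} [Field F] (f : Polynomial F) : Set (PowerSeries F) :=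
  {β | ∃ (m : ℕ) (p : Polynomial F), (f : PowerSeries F) ^ m * β = (p : PowerSeries F)}

/-- The set of affine tree automorphisms `AffMap (α, β)` with `β ∈ R` and `α` a unit of the
ring `R = F[X][1/f] ⊆ F⟦X⟧` (i.e. `α ∈ R` and its inverse in `F⟦X⟧` also lies in `R`). -/
def AGLSet {F : Type*} [Field F] (f : Polynomial F) : Set (Equiv.Perm (List F)) :=
  {g | ∃ α β : PowerSeries F, PowerSeries.constantCoeff α ≠ 0 ∧
    α ∈ Rset f ∧ α⁻¹ ∈ Rset f ∧ β ∈ Rset f ∧ ⇑g = affWord α β}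

open PowerSeries

section Words

variable {F : Type*} [CommSemiring F]

noncomputable def dropCoeffs (k : ℕ) (s : PowerSeries F) : PowerSeries F :=
  mk fun n => coeff (k + n) s

noncomputable def coeffWord (n : ℕ) (s : PowerSeries F) : List F :=
  List.ofFn fun i : Fin n => coeff i s

@[simp]
lemma coeff_dropCoeffs (k n : ℕ) (s : PowerSeries F) :
    coeff n (dropCoeffs k s) = coeff (k + n) s :=
  coeff_mk n _

lemma trunc_add_X_pow_mul_dropCoeffs (k : ℕ) (s : PowerSeries F) :
    (trunc k s : PowerSeries F) + X ^ k * dropCoeffs k s = s := by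
  ext n
  rw [map_add, Polynomial.coeff_coe, coeff_trunc, coeff_X_pow_mul']
  by_cases h : n < k
  · rw [if_pos h, if_neg (by omega), add_zero]
  · rw [if_neg h, if_pos (by omega), coeff_dropCoeffs, zero_add, Nat.add_sub_cancel' (by omega)]

lemma dropCoeffs_add_X_pow_mul (k : ℕ) (s t : PowerSeries F) :
    dropCoeffs k (s + X ^ k * t) = dropCoeffs k s + t := by
  ext n
  rw [coeff_dropCoeffs, map_add, map_add, coeff_dropCoeffs, add_comm k n, coeff_X_pow_mul]

lemma coeffWord_add_X_pow_mul (k : ℕ) (s t : PowerSeries F) :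
    coeffWord k (s + X ^ k * t) = coeffWord k s := by
  refine congrArg List.ofFn (funext fun i => ?_)
  rw [map_add, coeff_X_pow_mul', if_neg (by omega), add_zero]

lemma coeffWord_add (k n : ℕ) (s : PowerSeries F) :
    coeffWord (k + n) s = coeffWord k s ++ coeffWord n (dropCoeffs k s) := by
  simp [coeffWord, List.ofFn_add]

lemma coeff_wordToSeries (w : List F) (n : ℕ) : coeff n (wordToSeries w) = w.getD n 0 :=
  coeff_mk n _

lemma wordToSeries_coeffWord (n : ℕ) (s : PowerSeries F) :
    wordToSeries (coeffWord n s) = trunc n s := by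
  ext i
  rw [coeff_wordToSeries, Polynomial.coeff_coe, coeff_trunc]
  split_ifs with h
  · simp [coeffWord, h]
  · exact List.getD_eq_default _ _ (by simp [coeffWord]; omega)

lemma coeffWord_wordToSeries (w : List F) : coeffWord w.length (wordToSeries w) = w :=
  List.ext_getElem (by simp [coeffWord]) fun _ _ _ => by
    simp [coeffWord, coeff_wordToSeries]

lemma wordToSeries_append (u w : List F) :
    wordToSeries (u ++ w) = wordToSeries u + X ^ u.length * wordToSeries w := by
  ext n
  rw [map_add, coeff_X_pow_mul', coeff_wordToSeries, coeff_wordToSeries]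
  by_cases h : n < u.length
  · rw [List.getD_append _ _ _ _ h, if_neg (by omega), add_zero]
  · rw [List.getD_append_right _ _ _ _ (by omega), if_pos (by omega),
      List.getD_eq_default u _ (by omega), zero_add, coeff_wordToSeries]

lemma affWord_eq_coeffWord (α β : PowerSeries F) (w : List F) :
    affWord α β w = coeffWord w.length (α * wordToSeries w + β) :=
  rfl

@[simp]
lemma length_affWord (α β : PowerSeries F) (w : List F) : (affWord α β w).length = w.length := by
  simp [affWord]

lemma affWord_append (α β : PowerSeries F) (u w : List F) :
    affWord α β (u ++ w) =
      affWord α β u ++ affWord α (dropCoeffs u.length (α * wordToSeries u + β)) w := by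
  have hsplit : α * wordToSeries (u ++ w) + β =
      (α * wordToSeries u + β) + X ^ u.length * (α * wordToSeries w) := by
    rw [wordToSeries_append]; ring
  rw [affWord_eq_coeffWord, List.length_append, hsplit, coeffWord_add, coeffWord_add_X_pow_mul,
    dropCoeffs_add_X_pow_mul, add_comm (dropCoeffs _ _)]
  rfl

lemma affWord_affWord (α β α' β' : PowerSeries F) (w : List F) :
    affWord α β (affWord α' β' w) = affWord (α * α') (α * β' + β) w := by
  set n := w.length
  set s := α' * wordToSeries w + β'
  have hsplit : α * α' * wordToSeries w + (α * β' + β) =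
      (α * (trunc n s : PowerSeries F) + β) + X ^ n * (α * dropCoeffs n s) := by
    calc _ = α * ((trunc n s : PowerSeries F) + X ^ n * dropCoeffs n s) + β := by
          rw [trunc_add_X_pow_mul_dropCoeffs]; ring
      _ = _ := by ring
  rw [affWord_eq_coeffWord, length_affWord, affWord_eq_coeffWord α', wordToSeries_coeffWord,
    affWord_eq_coeffWord, hsplit, coeffWord_add_X_pow_mul]

lemma affWord_one_zero (w : List F) : affWord 1 0 w = w := by
  rw [affWord_eq_coeffWord, one_mul, add_zero, coeffWord_wordToSeries]

lemma state_affWord (α β : PowerSeries F) (u : List F) :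
    state (affWord α β) u = affWord α (dropCoeffs u.length (α * wordToSeries u + β)) := by
  funext w
  rw [state, affWord_append, List.drop_left' (length_affWord _ _ _)]

lemma affWord_nil (α β : PowerSeries F) : affWord α β [] = [] :=
  rfl

lemma exists_affWord_append_singleton (α β : PowerSeries F) (u : List F) (x : F) :
    ∃ y, affWord α β (u ++ [x]) = affWord α β u ++ [y] := by
  obtain ⟨y, hy⟩ := List.length_eq_one_iff.mp
    (length_affWord α (dropCoeffs u.length (α * wordToSeries u + β)) [x])
  exact ⟨y, by rw [affWord_append, hy]⟩

end Words

section AffinePerm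

variable {F : Type*} [Field F]

noncomputable def affPerm (α β : PowerSeries F) (hα : constantCoeff α ≠ 0) :
    Equiv.Perm (List F) where
  toFun := affWord α β
  invFun := affWord α⁻¹ (-(α⁻¹ * β))
  left_inv w := by
    rw [affWord_affWord, PowerSeries.inv_mul_cancel α hα, add_neg_cancel, affWord_one_zero]
  right_inv w := by
    rw [affWord_affWord, PowerSeries.mul_inv_cancel α hα, mul_neg, ← mul_assoc,
      PowerSeries.mul_inv_cancel α hα, one_mul, neg_add_cancel, affWord_one_zero]

lemma coe_affPerm_inv (α β : PowerSeries F) (hα : constantCoeff α ≠ 0) :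
    ⇑(affPerm α β hα)⁻¹ = affWord α⁻¹ (-(α⁻¹ * β)) :=
  rfl

lemma isTreeAut_affPerm (α β : PowerSeries F) (hα : constantCoeff α ≠ 0) :
    IsTreeAut (affPerm α β hα) :=
  ⟨affWord_nil α β, exists_affWord_append_singleton α β⟩

noncomputable def translation : Multiplicative (PowerSeries F) →* Equiv.Perm (List F) where
  toFun δ := affPerm 1 δ.toAdd (by simp)
  map_one' := Equiv.ext affWord_one_zero
  map_mul' δ δ' := Equiv.ext fun w => by
    change affWord 1 (δ.toAdd + δ'.toAdd) w = affWord 1 δ.toAdd (affWord 1 δ'.toAdd w)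
    rw [affWord_affWord, one_mul, one_mul, add_comm]

lemma isOfFinOrder_translation [Finite F] (δ : PowerSeries F) :
    IsOfFinOrder (translation (Multiplicative.ofAdd δ)) := by
  refine (translation (F := F)).isOfFinOrder
    (isOfFinOrder_ofAdd_iff.mpr (isOfFinAddOrder_iff_nsmul_eq_zero.mpr ?_))
  refine ⟨ringChar F, Nat.pos_of_ne_zero (CharP.char_ne_zero_of_finite F _), ?_⟩
  rw [← Nat.cast_smul_eq_nsmul F, ringChar.Nat.cast_ringChar, zero_smul]

end AffinePerm

section SIntegers

variable {F : Type*} [Field F] {f : Polynomial F}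

variable (f) in
def sIntegers : Subring (PowerSeries F) where
  carrier := Rset f
  mul_mem' := by
    rintro a b ⟨m, p, hp⟩ ⟨m', p', hp'⟩
    exact ⟨m + m', p * p', by rw [Polynomial.coe_mul, ← hp, ← hp']; ring⟩
  one_mem' := ⟨0, 1, by simp⟩
  add_mem' := by
    rintro a b ⟨m, p, hp⟩ ⟨m', p', hp'⟩
    refine ⟨m + m', f ^ m' * p + f ^ m * p', ?_⟩
    simp only [Polynomial.coe_add, Polynomial.coe_mul, Polynomial.coe_pow, ← hp, ← hp']
    ring
  zero_mem' := ⟨0, 0, by simp⟩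
  neg_mem' := by
    rintro a ⟨m, p, hp⟩
    exact ⟨m, -p, by rw [Polynomial.coe_neg, ← hp, mul_neg]⟩

lemma coe_mem_sIntegers (p : Polynomial F) : (p : PowerSeries F) ∈ sIntegers f :=
  ⟨0, p, by simp⟩

lemma mem_sIntegers_of_X_pow_mul_mem {k : ℕ} {γ : PowerSeries F}
    (h : X ^ k * γ ∈ sIntegers f) : γ ∈ sIntegers f := by
  obtain ⟨m, p, hp⟩ := h
  obtain ⟨q, rfl⟩ : Polynomial.X ^ k ∣ p := by
    refine Polynomial.X_pow_dvd_iff.mpr fun d hd => ?_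
    rw [← Polynomial.coeff_coe, ← hp, mul_left_comm]
    exact X_pow_dvd_iff.mp (dvd_mul_right _ _) d hd
  refine ⟨m, q, X_pow_mul_cancel (k := k) ?_⟩
  rw [Polynomial.coe_mul, Polynomial.coe_pow, Polynomial.coe_X] at hp
  rw [← hp, mul_left_comm]

lemma dropCoeffs_mem_sIntegers (k : ℕ) {s : PowerSeries F} (hs : s ∈ sIntegers f) :
    dropCoeffs k s ∈ sIntegers f := by
  refine mem_sIntegers_of_X_pow_mul_mem (k := k) ?_
  rw [← add_sub_cancel_left (trunc k s : PowerSeries F) (X ^ k * dropCoeffs k s),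
    trunc_add_X_pow_mul_dropCoeffs]
  exact sub_mem hs (coe_mem_sIntegers _)

lemma wordToSeries_mem_sIntegers (u : List F) : wordToSeries u ∈ sIntegers f := by
  have h := wordToSeries_coeffWord u.length (wordToSeries u)
  rw [coeffWord_wordToSeries] at h
  exact h ▸ coe_mem_sIntegers _

end SIntegers

section Vanishing

variable {F : Type*} [CommSemiring F]

lemma coeff_mul_eq_zero_of_le {s t : PowerSeries F} {A B : ℕ} (hs : ∀ i ≥ A, coeff i s = 0)
    (ht : ∀ j ≥ B, coeff j t = 0) : ∀ n ≥ A + B, coeff n (s * t) = 0 := by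
  intro n hn
  refine (coeff_mul n s t).trans (Finset.sum_eq_zero fun ij hij => ?_)
  rw [Finset.HasAntidiagonal.mem_antidiagonal] at hij
  by_cases hi : ij.1 ≥ A
  · rw [hs _ hi, zero_mul]
  · rw [ht _ (by omega), mul_zero]

lemma coeff_coe_eq_zero_of_natDegree_lt (p : Polynomial F) :
    ∀ i ≥ p.natDegree + 1, coeff i (p : PowerSeries F) = 0 := fun _ hi => by
  rw [Polynomial.coeff_coe, Polynomial.coeff_eq_zero_of_natDegree_lt hi]

lemma coeff_wordToSeries_eq_zero (u : List F) : ∀ i ≥ u.length, coeff i (wordToSeries u) = 0 :=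
  fun _ hi => by rw [coeff_wordToSeries, List.getD_eq_default _ _ hi]

lemma coeff_mul_dropCoeffs_eq_zero {φ s : PowerSeries F} {k N : ℕ}
    (hφ : ∀ i ≥ N, coeff i φ = 0) (hs : ∀ i ≥ N + k, coeff i (φ * s) = 0) :
    ∀ n ≥ N, coeff n (φ * dropCoeffs k s) = 0 := by
  intro n hn
  have htrunc := coeff_mul_eq_zero_of_le (t := (trunc k s : PowerSeries F)) (B := k) hφ
    (fun j hj => by rw [Polynomial.coeff_coe, coeff_trunc, if_neg (by omega)]) (n + k) (by omega)
  have hsplit := congrArg (coeff (n + k))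
    (congrArg (φ * ·) (trunc_add_X_pow_mul_dropCoeffs k s))
  rw [mul_add, map_add, htrunc, zero_add, mul_left_comm, coeff_X_pow_mul,
    hs _ (by omega)] at hsplit
  exact hsplit

end Vanishing

lemma finite_setOf_coeff_mul_eq_zero {F : Type*} [Field F] [Finite F] {φ : PowerSeries F}
    (hφ : φ ≠ 0) (N : ℕ) : {γ | ∀ n ≥ N, coeff n (φ * γ) = 0}.Finite := by
  refine Set.Finite.of_finite_image (f := fun γ (i : Fin N) => coeff i (φ * γ))
    (Set.toFinite _) fun γ hγ γ' hγ' heq => mul_left_cancel₀ hφ (ext fun n => ?_)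
  by_cases hn : n < N
  · exact congrFun heq ⟨n, hn⟩
  · rw [hγ n (by omega), hγ' n (by omega)]

section AGL

variable {F : Type*} [Field F] {f : Polynomial F}

lemma eq_affPerm_of_coe_eq {g : Equiv.Perm (List F)} {α β : PowerSeries F}
    (hα : constantCoeff α ≠ 0) (hg : ⇑g = affWord α β) : g = affPerm α β hα :=
  Equiv.ext (congrFun hg)

lemma affPerm_inv_mul_affPerm (α β γ : PowerSeries F) (hα : constantCoeff α ≠ 0) :
    (affPerm α γ hα)⁻¹ * affPerm α β hα = translation (Multiplicative.ofAdd (α⁻¹ * (β - γ))) := by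
  refine inv_mul_eq_iff_eq_mul.mpr (Equiv.ext fun w => ?_)
  change affWord α β w = affWord α γ (affWord 1 (α⁻¹ * (β - γ)) w)
  rw [affWord_affWord, mul_one, ← mul_assoc, PowerSeries.mul_inv_cancel α hα, one_mul,
    sub_add_cancel]

variable (f) in
def aglSubgroup : Subgroup (Equiv.Perm (List F)) where
  carrier := AGLSet f
  one_mem' := ⟨1, 0, by simp, one_mem (sIntegers f), by rw [inv_one]; exact one_mem (sIntegers f),
    zero_mem (sIntegers f), (funext affWord_one_zero).symm⟩
  mul_mem' := by
    rintro a b ⟨α, β, hα0, hα, hα', hβ, ha⟩ ⟨α₂, β₂, hα₂0, hα₂, hα₂', hβ₂, hb⟩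
    refine ⟨α * α₂, α * β₂ + β, by simp [hα0, hα₂0], mul_mem (s := sIntegers f) hα hα₂, ?_,
      add_mem (mul_mem (s := sIntegers f) hα hβ₂) hβ, ?_⟩
    · rw [PowerSeries.mul_inv_rev]
      exact mul_mem (s := sIntegers f) hα₂' hα'
    · rw [Equiv.Perm.coe_mul, ha, hb]
      exact funext (affWord_affWord α β α₂ β₂)
  inv_mem' := by
    rintro a ⟨α, β, hα0, hα, hα', hβ, ha⟩
    have hinv0 : constantCoeff α⁻¹ ≠ 0 := by simpa using hα0
    refine ⟨α⁻¹, -(α⁻¹ * β), hinv0, hα', ?_, neg_mem (mul_mem (s := sIntegers f) hα' hβ), ?_⟩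
    · rwa [(PowerSeries.inv_eq_iff_mul_eq_one hinv0).mpr (PowerSeries.mul_inv_cancel α hα0)]
    · rw [eq_affPerm_of_coe_eq hα0 ha, coe_affPerm_inv]

lemma isTreeAutGroup_aglSubgroup : IsTreeAutGroup (aglSubgroup f) := by
  rintro g ⟨α, β, hα0, -, -, -, hg⟩
  rw [eq_affPerm_of_coe_eq hα0 hg]
  exact isTreeAut_affPerm α β hα0

lemma coarselyDiagonal_aglSubgroup [Finite F] : CoarselyDiagonal (aglSubgroup f) := by
  rintro g ⟨α, β, hα0, hα, hα', hβ, hg⟩ u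
  set γ := dropCoeffs u.length (α * wordToSeries u + β)
  have hγ : γ ∈ sIntegers f := dropCoeffs_mem_sIntegers _
    (add_mem (mul_mem hα (wordToSeries_mem_sIntegers u)) hβ)
  refine ⟨affPerm α γ hα0, ⟨α, γ, hα0, hα, hα', hγ, rfl⟩, by rw [hg, state_affWord]; rfl, ?_⟩
  rw [eq_affPerm_of_coe_eq hα0 hg, affPerm_inv_mul_affPerm]
  exact isOfFinOrder_translation _

lemma finiteStateFun_affWord [Finite F] (hf : f ≠ 0) {α β : PowerSeries F}
    (hα : α ∈ sIntegers f) (hβ : β ∈ sIntegers f) : FiniteStateFun (affWord α β) := by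
  obtain ⟨m, a, ha⟩ := hα
  obtain ⟨m', b, hb⟩ := hβ
  set φ : Polynomial F := f ^ (m + m')
  have hφα : (φ : PowerSeries F) * α = ↑(f ^ m' * a) := by
    rw [Polynomial.coe_mul, ← ha]; simp only [φ, Polynomial.coe_pow]; ring
  have hφβ : (φ : PowerSeries F) * β = ↑(f ^ m * b) := by
    rw [Polynomial.coe_mul, ← hb]; simp only [φ, Polynomial.coe_pow]; ring
  set N := φ.natDegree + (f ^ m' * a).natDegree + (f ^ m * b).natDegree + 1
  have hstate : ∀ u : List F, dropCoeffs u.length (α * wordToSeries u + β) ∈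
      {γ | ∀ n ≥ N, coeff n ((φ : PowerSeries F) * γ) = 0} := fun u =>
    coeff_mul_dropCoeffs_eq_zero (N := N) (k := u.length)
      (fun i hi => coeff_coe_eq_zero_of_natDegree_lt φ i (by omega)) fun i hi => by
        rw [mul_add, ← mul_assoc, hφα, hφβ, map_add,
          coeff_mul_eq_zero_of_le (coeff_coe_eq_zero_of_natDegree_lt _)
            (coeff_wordToSeries_eq_zero u) i (by omega),
          coeff_coe_eq_zero_of_natDegree_lt _ i (by omega), add_zero]
  have hφ : (φ : PowerSeries F) ≠ 0 := by
    rw [Ne, Polynomial.coe_eq_zero_iff]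
    exact pow_ne_zero _ hf
  refine ((finite_setOf_coeff_mul_eq_zero hφ N).image (affWord α)).subset ?_
  rintro _ ⟨u, rfl⟩
  exact ⟨_, hstate u, (state_affWord α β u).symm⟩

lemma finiteStateGroup_aglSubgroup [Finite F] (hf : f ≠ 0) : FiniteStateGroup (aglSubgroup f) := by
  rintro g ⟨α, β, -, hα, -, hβ, hg⟩
  rw [hg]
  exact finiteStateFun_affWord hf hα hβ

end AGL

/-- Let `F` be a finite field, `f ∈ F[X]` with `f(0) ≠ 0`, and
`R = F[X][1/f] ⊆ F⟦X⟧`.  Then `G = { AffMap (α, β) : β ∈ R, α a unit of R }` is a subgroup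
of `Aut(T_F)` which is self-similar, coarsely diagonal, and finite-state. -/
theorem aglOfSIntegers_selfSimilar_coarselyDiagonal_finiteState
    {F : Type*} [Field F] [Fintype F] (f : Polynomial F) (hf : f.eval 0 ≠ 0) :
    (∃ G : Subgroup (Equiv.Perm (List F)), (G : Set (Equiv.Perm (List F))) = AGLSet f) ∧
    ∀ G : Subgroup (Equiv.Perm (List F)), (G : Set (Equiv.Perm (List F))) = AGLSet f →
      IsTreeAutGroup G ∧ SelfSimilar G ∧ CoarselyDiagonal G ∧ FiniteStateGroup G := by
  have hf0 : f ≠ 0 := by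
    rintro rfl
    exact hf Polynomial.eval_zero
  refine ⟨⟨aglSubgroup f, rfl⟩, fun G hG => ?_⟩
  obtain rfl : G = aglSubgroup f := SetLike.coe_injective hG
  have hcd : CoarselyDiagonal (aglSubgroup f) := coarselyDiagonal_aglSubgroup
  exact ⟨isTreeAutGroup_aglSubgroup, fun g hg u => (hcd g hg u).imp fun _ h => ⟨h.1, h.2.1⟩,
    hcd, finiteStateGroup_aglSubgroup hf0⟩

end RoverNekrashevych
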